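/- arXiv:1902.06616 — 5 statements merged into one kernel-verified Lean document; each statement's English description precedes it below -/
import Mathlib

section
/- Let p be a prime and F a finite field of characteristic p, viewed as an algebra over the prime field 𝔽_p = ZMod p. Let α ∈ F be nonzero and suppose F = 𝔽_p(α), i.e. Algebra.adjoin 𝔽_p {α} = F, and let y ∈ F be nonzero. Let G be the subgroup of GL₂(F) generated by the two matrices [[α, 0], [0, 1]] and [[1, y], [0, 1]]. Then the cardinality of G is m · |F|, where m is the multiplicative order of α in Fˣ. -/
/-! The generated group consists of the affine maps `z ↦ v z + b` with `v ∈ ⟨α⟩`. The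
translations `b` it contains form an additive subgroup `T` of `F` with `y ∈ T`, and conjugating by
`[[α, 0], [0, 1]]` shows `α T ⊆ T`. Since `T` is automatically a `ZMod p`-module and `α`
generates `F` as a `ZMod p`-algebra, `T` is an ideal, hence `T = F`. Every element then factors
uniquely as a translation times `diag(v, 1)`, giving the count `ord(α) · |F|`. -/

open Matrix

theorem AddSubgroup.mul_mem_of_adjoin_singleton_eq_top {n : ℕ} {R : Type*} [Ring R]
    [Algebra (ZMod n) R] {a : R} (ha : Algebra.adjoin (ZMod n) {a} = ⊤) {T : AddSubgroup R}
    (hT : ∀ t ∈ T, a * t ∈ T) (c : R) {t : R} (ht : t ∈ T) : c * t ∈ T := by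
  have hc : c ∈ Algebra.adjoin (ZMod n) {a} := ha ▸ Algebra.mem_top
  induction hc using Algebra.adjoin_induction generalizing t with
  | mem x hx => exact (Set.mem_singleton_iff.1 hx) ▸ hT t ht
  | algebraMap r => rw [← Algebra.smul_def]; exact ZMod.smul_mem ht r
  | add x y _ _ hx hy => rw [add_mul]; exact T.add_mem (hx ht) (hy ht)
  | mul x y _ _ hx hy => rw [mul_assoc]; exact hx (hy ht)

namespace Matrix.GeneralLinearGroup

section Ring

variable {R : Type*} [Ring R]

@[simps apply]
def upperLeftHom : Rˣ →* GL (Fin 2) R where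
  toFun u := ⟨!![(u : R), 0; 0, 1], !![((u⁻¹ : Rˣ) : R), 0; 0, 1],
    by simp [one_fin_two], by simp [one_fin_two]⟩
  map_one' := by simp [Units.ext_iff, one_fin_two]
  map_mul' u v := by simp [Units.ext_iff]

lemma upperLeftHom_mul_upperRightHom (u : Rˣ) (b : R) :
    upperLeftHom u * upperRightHom b = upperRightHom (u * b) * upperLeftHom u := by
  simp [Units.ext_iff]

lemma upperRightHom_mul_upperLeftHom_inj {b c : R} {u v : Rˣ} :
    upperRightHom b * upperLeftHom u = upperRightHom c * upperLeftHom v ↔ b = c ∧ u = v := by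
  refine ⟨fun h ↦ ?_, fun ⟨hbc, huv⟩ ↦ hbc ▸ huv ▸ rfl⟩
  have h00 := congrArg (fun g : GL (Fin 2) R ↦ g 0 0) h
  have h01 := congrArg (fun g : GL (Fin 2) R ↦ g 0 1) h
  simp only [Units.val_mul, upperRightHom_apply, upperLeftHom_apply, mul_fin_two] at h00 h01
  exact ⟨by simpa using h01, Units.ext (by simpa using h00)⟩

/-- The affine maps `z ↦ u z + b`, `u ∈ H`, as `[[1, b], [0, 1]] * [[u, 0], [0, 1]]`. -/
def affineSubgroup (H : Subgroup Rˣ) : Subgroup (GL (Fin 2) R) where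
  carrier := {g | ∃ b, ∃ u ∈ H, upperRightHom b * upperLeftHom u = g}
  one_mem' := ⟨0, 1, H.one_mem, by rw [AddChar.map_zero_eq_one, map_one, one_mul]⟩
  mul_mem' := by
    rintro _ _ ⟨b, u, hu, rfl⟩ ⟨c, v, hv, rfl⟩
    refine ⟨b + u * c, u * v, H.mul_mem hu hv, ?_⟩
    simp only [AddChar.map_add_eq_mul, MonoidHom.map_mul, mul_assoc]
    rw [← mul_assoc (upperLeftHom u) (upperRightHom c), upperLeftHom_mul_upperRightHom, mul_assoc]
  inv_mem' := by
    rintro _ ⟨b, u, hu, rfl⟩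
    refine ⟨-(u⁻¹ * b), u⁻¹, H.inv_mem hu, ?_⟩
    rw [_root_.mul_inv_rev, ← map_inv, ← AddChar.map_neg_eq_inv, upperLeftHom_mul_upperRightHom,
      mul_neg]

lemma card_affineSubgroup (H : Subgroup Rˣ) :
    Nat.card (affineSubgroup H) = Nat.card R * Nat.card H := by
  rw [← Nat.card_prod]
  refine (Nat.card_congr (Equiv.ofBijective
    (fun x ↦ ⟨upperRightHom x.1 * upperLeftHom x.2, x.1, x.2, x.2.2, rfl⟩) ⟨?_, ?_⟩)).symm
  · rintro ⟨b, u⟩ ⟨c, v⟩ h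
    obtain ⟨rfl, huv⟩ := upperRightHom_mul_upperLeftHom_inj.1 (congrArg Subtype.val h)
    exact Prod.ext rfl (Subtype.ext huv)
  · rintro ⟨_, b, u, hu, rfl⟩
    exact ⟨(b, ⟨u, hu⟩), rfl⟩

end Ring

section Field

variable {K : Type*} [Field K] {n : ℕ} [Algebra (ZMod n) K] {u : Kˣ} {y : K}

lemma strictPeriods_closure_eq_top (hu : Algebra.adjoin (ZMod n) {(u : K)} = ⊤) (hy : y ≠ 0) :
    (Subgroup.closure {upperLeftHom u, upperRightHom y}).strictPeriods = ⊤ := by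
  set C := Subgroup.closure {upperLeftHom u, upperRightHom y}
  have hD : upperLeftHom u ∈ C := Subgroup.subset_closure (by simp)
  have hy_mem : y ∈ C.strictPeriods := by
    rw [Subgroup.mem_strictPeriods_iff]; exact Subgroup.subset_closure (by simp)
  have hconj : ∀ t ∈ C.strictPeriods, (u : K) * t ∈ C.strictPeriods := by
    intro t ht
    rw [Subgroup.mem_strictPeriods_iff] at ht ⊢
    rw [← mul_inv_eq_iff_eq_mul.2 (upperLeftHom_mul_upperRightHom u t)]
    exact C.mul_mem (C.mul_mem hD ht) (C.inv_mem hD)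
  refine eq_top_iff.2 fun c _ ↦ ?_
  simpa [hy] using AddSubgroup.mul_mem_of_adjoin_singleton_eq_top hu hconj (c * y⁻¹) hy_mem

lemma closure_upperLeftHom_upperRightHom (hu : Algebra.adjoin (ZMod n) {(u : K)} = ⊤)
    (hy : y ≠ 0) :
    Subgroup.closure {upperLeftHom u, upperRightHom y} = affineSubgroup (Subgroup.zpowers u) := by
  refine le_antisymm ((Subgroup.closure_le _).2 ?_) ?_
  · rintro _ (rfl | rfl)
    · exact ⟨0, u, Subgroup.mem_zpowers u, by rw [AddChar.map_zero_eq_one, one_mul]⟩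
    · exact ⟨y, 1, Subgroup.one_mem _, by rw [map_one, mul_one]⟩
  · rintro _ ⟨b, v, hv, rfl⟩
    have hU : b ∈ (Subgroup.closure {upperLeftHom u, upperRightHom y}).strictPeriods :=
      strictPeriods_closure_eq_top hu hy ▸ AddSubgroup.mem_top b
    obtain ⟨k, rfl⟩ := Subgroup.mem_zpowers_iff.1 hv
    refine Subgroup.mul_mem _ (Subgroup.mem_strictPeriods_iff.1 hU) ?_
    rw [map_zpow]
    exact Subgroup.zpow_mem _ (Subgroup.subset_closure (by simp)) k

end Field

end Matrix.GeneralLinearGroup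

theorem stmt_1_general (p : ℕ) {F : Type*} [Field F] [Fintype F]
    [Algebra (ZMod p) F] (α y : F) (hα : α ≠ 0)
    (hadj : Algebra.adjoin (ZMod p) ({α} : Set F) = ⊤) (hy : y ≠ 0)
    (A B : GL (Fin 2) F)
    (hA : (A : Matrix (Fin 2) (Fin 2) F) = !![α, 0; 0, 1])
    (hB : (B : Matrix (Fin 2) (Fin 2) F) = !![1, y; 0, 1]) :
    Nat.card (Subgroup.closure ({A, B} : Set (GL (Fin 2) F))) =
      orderOf (Units.mk0 α hα) * Fintype.card F := by
  have hA' : A = GeneralLinearGroup.upperLeftHom (Units.mk0 α hα) := Units.ext hA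
  have hB' : B = GeneralLinearGroup.upperRightHom y := Units.ext hB
  rw [hA', hB',
    GeneralLinearGroup.closure_upperLeftHom_upperRightHom (u := Units.mk0 α hα) hadj hy,
    GeneralLinearGroup.card_affineSubgroup, Nat.card_zpowers, Nat.card_eq_fintype_card, mul_comm]

/-- If `F` is a finite field of characteristic `p`, `α ∈ F` is nonzero with
`F = 𝔽_p(α)`, and `y ∈ F` is nonzero, then the subgroup of `GL₂(F)` generated by
`[[α,0],[0,1]]` and `[[1,y],[0,1]]` has order `m · |F|`, where `m` is the
multiplicative order of `α`. -/
theorem stmt_1 (p : ℕ) [Fact p.Prime] {F : Type*} [Field F] [Fintype F] [CharP F p]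
    [Algebra (ZMod p) F] (α y : F) (hα : α ≠ 0)
    (hadj : Algebra.adjoin (ZMod p) ({α} : Set F) = ⊤) (hy : y ≠ 0)
    (A B : GL (Fin 2) F)
    (hA : (A : Matrix (Fin 2) (Fin 2) F) = !![α, 0; 0, 1])
    (hB : (B : Matrix (Fin 2) (Fin 2) F) = !![1, y; 0, 1]) :
    Nat.card (Subgroup.closure ({A, B} : Set (GL (Fin 2) F))) =
      orderOf (Units.mk0 α hα) * Fintype.card F :=
  stmt_1_general p α y hα hadj hy A B hA hB
end

section
/- Let n ≥ 1 and let A be an n × n matrix over the polynomial ring ℤ[t] such that: (1) every entry of A lies in the set {0, 1, t, t−1}; (2) in each row of A, each of the entries 1, t, and t−1 occurs at most once; and (3) no row of A is the zero vector. Then every coefficient a of the polynomial det(A) satisfies |a| ≤ 4^{n−1}. -/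
/-!
Expand `det A` along its first row. An entry `p ∈ {0, 1, t, t - 1}` multiplies the coefficients
of a minor by at most the sum `‖p‖₁` of the absolute values of its coefficients, and conditions
(1)–(2) make the first row's total `∑ ‖A₀ⱼ‖₁ ≤ 1 + 1 + 2 = 4`. Deleting the first row and a
column keeps (1)–(2), so induction gives `4 ^ (n - 1)`, starting from the `1 × 1` case where the
coefficients of `0, 1, t, t - 1` are at most `1` in absolute value.
-/

open Polynomial Finset

namespace Polynomial

variable {R : Type*} [Ring R] [LinearOrder R] [IsOrderedRing R]

def l1Norm (p : R[X]) : R := ∑ i ∈ p.support, |p.coeff i|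

lemma l1Norm_eq_sum_of_support_subset {p : R[X]} {s : Finset ℕ} (hs : p.support ⊆ s) :
    p.l1Norm = ∑ i ∈ s, |p.coeff i| :=
  sum_subset hs fun i _ hi => by simp [notMem_support_iff.mp hi]

lemma abs_coeff_mul_le (p q : R[X]) {B : R} (hq : ∀ m, |q.coeff m| ≤ B) (k : ℕ) :
    |(p * q).coeff k| ≤ p.l1Norm * B := by
  have hB : 0 ≤ B := (abs_nonneg _).trans (hq 0)
  conv_lhs => rw [p.as_sum_support_C_mul_X_pow, sum_mul, finsetSum_coeff]
  rw [l1Norm, sum_mul]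
  refine (abs_sum_le_sum_abs _ _).trans (sum_le_sum fun i _ => ?_)
  rw [mul_assoc, coeff_C_mul, abs_mul, coeff_X_pow_mul']
  gcongr
  split_ifs <;> simp [hq, hB]

end Polynomial

/-- Conditions (1) and (2) on one row of the matrix. -/
def IsAlexanderRow {ι : Type*} [Fintype ι] (r : ι → ℤ[X]) : Prop :=
  (∀ j, r j ∈ ({0, 1, X, X - 1} : Set ℤ[X])) ∧
    ∀ v ∈ ({1, X, X - 1} : Set ℤ[X]), (univ.filter fun j => r j = v).card ≤ 1

lemma abs_coeff_le_one_of_mem {p : ℤ[X]} (hp : p ∈ ({0, 1, X, X - 1} : Set ℤ[X])) (k : ℕ) :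
    |p.coeff k| ≤ 1 := by
  rcases hp with rfl | rfl | rfl | rfl <;>
    simp only [coeff_zero, coeff_one, coeff_X, coeff_sub] <;> (try split_ifs) <;> norm_num

lemma l1Norm_le_of_mem {p : ℤ[X]} (hp : p ∈ ({0, 1, X, X - 1} : Set ℤ[X])) :
    p.l1Norm ≤
      (if p = 1 then 1 else 0) + (if p = X then 1 else 0) + 2 * if p = X - 1 then 1 else 0 := by
  have hsupp : p.support ⊆ range 2 := by
    rcases hp with rfl | rfl | rfl | rfl <;> intro i hi <;>
      simp [coeff_one, coeff_X] at hi ⊢ <;> omega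
  rw [l1Norm_eq_sum_of_support_subset hsupp]
  rcases hp with rfl | rfl | rfl | rfl <;> simp [sum_range_succ, coeff_one, coeff_X] <;>
    split_ifs <;> norm_num

namespace IsAlexanderRow

variable {ι κ : Type*} [Fintype ι] [Fintype κ] {r : ι → ℤ[X]}

lemma comp_injective (hr : IsAlexanderRow r) {f : κ → ι} (hf : Function.Injective f) :
    IsAlexanderRow (r ∘ f) :=
  ⟨fun j => hr.1 (f j), fun v hv =>
    (card_le_card_of_injOn f (fun j hj => by simpa using hj) hf.injOn).trans (hr.2 v hv)⟩

lemma sum_l1Norm_le_four (hr : IsAlexanderRow r) : ∑ j, (r j).l1Norm ≤ 4 := by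
  have hcard : ∀ v ∈ ({1, X, X - 1} : Set ℤ[X]), ∑ j, (if r j = v then 1 else 0 : ℤ) ≤ 1 :=
    fun v hv => by rw [sum_boole]; exact_mod_cast hr.2 v hv
  calc ∑ j, (r j).l1Norm
      ≤ ∑ j, ((if r j = 1 then 1 else 0) + (if r j = X then 1 else 0) +
          2 * if r j = X - 1 then 1 else 0) := sum_le_sum fun j _ => l1Norm_le_of_mem (hr.1 j)
    _ ≤ 4 := by
      rw [sum_add_distrib, sum_add_distrib, ← mul_sum]
      linarith [hcard 1 (by simp), hcard X (by simp), hcard (X - 1) (by simp)]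

end IsAlexanderRow

lemma abs_coeff_neg_one_pow_mul (j : ℕ) (p : ℤ[X]) (k : ℕ) :
    |((-1) ^ j * p).coeff k| = |p.coeff k| := by
  rcases neg_one_pow_eq_or ℤ[X] j with h | h <;> simp [h]

theorem abs_coeff_det_le_four_pow (n : ℕ) (A : Matrix (Fin (n + 1)) (Fin (n + 1)) ℤ[X])
    (hA : ∀ i, IsAlexanderRow (A i)) (k : ℕ) : |A.det.coeff k| ≤ 4 ^ n := by
  induction n generalizing k with
  | zero => simpa using abs_coeff_le_one_of_mem ((hA 0).1 0) k
  | succ n ih =>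
    have hminor : ∀ (j : Fin (n + 2)) m,
        |(A.submatrix Fin.succ j.succAbove).det.coeff m| ≤ 4 ^ n :=
      fun j => ih _ fun i => (hA i.succ).comp_injective Fin.succAbove_right_injective
    rw [Matrix.det_succ_row_zero, finsetSum_coeff]
    calc |∑ j : Fin (n + 2),
            ((-1) ^ (j : ℕ) * A 0 j * (A.submatrix Fin.succ j.succAbove).det).coeff k|
        ≤ ∑ j, (A 0 j).l1Norm * 4 ^ n := by
          refine (abs_sum_le_sum_abs _ _).trans (sum_le_sum fun j _ => ?_)
          rw [mul_assoc, abs_coeff_neg_one_pow_mul]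
          exact abs_coeff_mul_le _ _ (hminor j) k
      _ ≤ 4 * 4 ^ n := by rw [← sum_mul]; gcongr; exact (hA 0).sum_l1Norm_le_four
      _ = 4 ^ (n + 1) := by ring

theorem stmt_5_general (n : ℕ) (A : Matrix (Fin n) (Fin n) (Polynomial ℤ))
    (h1 : ∀ i j, A i j ∈ ({0, 1, X, X - 1} : Set (Polynomial ℤ)))
    (h2 : ∀ i, ∀ v ∈ ({1, X, X - 1} : Set (Polynomial ℤ)),
      (Finset.univ.filter fun j => A i j = v).card ≤ 1) :
    ∀ k, |(A.det).coeff k| ≤ 4 ^ (n - 1) := by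
  intro k
  cases n with
  | zero => simpa using abs_coeff_le_one_of_mem (p := 1) (by simp) k
  | succ n => simpa using abs_coeff_det_le_four_pow n A (fun i => ⟨h1 i, h2 i⟩) k

/-- If `A` is an `n × n` matrix over `ℤ[t]` whose entries lie in `{0, 1, t, t-1}`,
such that in each row each of `1`, `t`, `t-1` occurs at most once, and no row is
zero, then every coefficient `a` of `det A` satisfies `|a| ≤ 4^(n-1)`.
(Lemma 3.1.) -/
theorem stmt_5 (n : ℕ) (hn : 1 ≤ n) (A : Matrix (Fin n) (Fin n) (Polynomial ℤ))
    (h1 : ∀ i j, A i j ∈ ({0, 1, X, X - 1} : Set (Polynomial ℤ)))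
    (h2 : ∀ i, ∀ v ∈ ({1, X, X - 1} : Set (Polynomial ℤ)),
      (Finset.univ.filter fun j => A i j = v).card ≤ 1)
    (h3 : ∀ i, ∃ j, A i j ≠ 0) :
    ∀ k, |(A.det).coeff k| ≤ 4 ^ (n - 1) :=
  stmt_5_general n A h1 h2
end

section
/- Let Δ ∈ ℤ[t] be a polynomial of degree at least 1 with nonzero constant coefficient a₀ and nonzero leading coefficient a_d, and let B be a natural number with |a₀| ≤ B and |a_d| ≤ B. Then there exist a prime p with B < p ≤ 2B and a nonzero element α of the algebraic closure of 𝔽_p = ZMod p such that the reduction of Δ modulo p vanishes at α and the minimal polynomial of α over 𝔽_p has degree at most deg Δ. -/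
private lemma cast_ne_zero_of_abs_le {a : ℤ} {B p : ℕ} (ha : a ≠ 0) (hB : |a| ≤ (B : ℤ))
    (hp : B < p) : (a : ZMod p) ≠ 0 := by
  intro h
  rw [ZMod.intCast_zmod_eq_zero_iff_dvd] at h
  have := Int.le_of_dvd (abs_pos.mpr ha) ((dvd_abs _ _).mpr h)
  omega

/-- Bertrand's postulate produces a prime `B < p ≤ 2B` beyond the absolute values
of the constant and leading coefficients of `Δ`, such that the reduction of `Δ`
mod `p` has a nonzero root `α` in the algebraic closure of `𝔽_p` whose degree over
`𝔽_p` is at most `deg Δ`. (Arithmetic core of Theorem 1.) -/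
theorem stmt_7 (Δ : Polynomial ℤ) (hdeg : 1 ≤ Δ.natDegree) (h0 : Δ.coeff 0 ≠ 0)
    (hd : Δ.leadingCoeff ≠ 0) (B : ℕ) (hB0 : |Δ.coeff 0| ≤ (B : ℤ))
    (hBd : |Δ.leadingCoeff| ≤ (B : ℤ)) :
    ∃ p : ℕ, p.Prime ∧ B < p ∧ p ≤ 2 * B ∧
      ∀ [Fact p.Prime], ∃ α : AlgebraicClosure (ZMod p), α ≠ 0 ∧
        Polynomial.aeval α (Δ.map (Int.castRingHom (ZMod p))) = 0 ∧
        (minpoly (ZMod p) α).natDegree ≤ Δ.natDegree := by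
  have hB : B ≠ 0 := by
    rintro rfl
    simp only [Nat.cast_zero] at hB0
    exact h0 (abs_nonpos_iff.mp hB0)
  obtain ⟨p, hp, hBp, hp2B⟩ := Nat.exists_prime_lt_and_le_two_mul B hB
  refine ⟨p, hp, hBp, hp2B, ?_⟩
  intro _
  set φ := Int.castRingHom (ZMod p)
  set q := Δ.map φ with hq
  have hlead : φ Δ.leadingCoeff ≠ 0 := cast_ne_zero_of_abs_le hd hBd hBp
  have hqdeg : q.natDegree = Δ.natDegree :=
    Polynomial.natDegree_map_of_leadingCoeff_ne_zero φ hlead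
  have hc0 : q.coeff 0 ≠ 0 := by
    rw [hq, Polynomial.coeff_map]
    exact cast_ne_zero_of_abs_le h0 hB0 hBp
  set K := AlgebraicClosure (ZMod p)
  set r := q.map (algebraMap (ZMod p) K) with hr
  have hrlead : (algebraMap (ZMod p) K) q.leadingCoeff ≠ 0 := by
    simp only [ne_eq, map_eq_zero]
    intro h
    exact hlead (by rwa [hq, Polynomial.leadingCoeff_map_of_leadingCoeff_ne_zero φ hlead] at h)
  have hrdeg : r.natDegree = q.natDegree :=
    Polynomial.natDegree_map_of_leadingCoeff_ne_zero _ hrlead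
  have hrpos : 0 < r.degree := by
    rw [Polynomial.natDegree_pos_iff_degree_pos.symm, hrdeg, hqdeg]
    omega
  obtain ⟨α, hα⟩ := IsAlgClosed.exists_root r (fun h => by simp [h] at hrpos)
  have haeval : Polynomial.aeval α q = 0 := by
    rwa [Polynomial.aeval_def, ← Polynomial.eval_map, ← hr, ← Polynomial.IsRoot.def]
  refine ⟨α, ?_, haeval, ?_⟩
  · rintro rfl
    rw [Polynomial.aeval_def, Polynomial.eval₂_at_zero] at haeval
    exact hc0 (by simpa using haeval)
  · have hdle := minpoly.degree_le_of_ne_zero (ZMod p) α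
      (fun h => hc0 (by rw [hq] at h ⊢; simp [h])) haeval
    have := Polynomial.natDegree_le_natDegree hdle
    omega
end

section
/- Let κ be a field and α ∈ κ with α ≠ 0, and let Γ be the group with presentation ⟨t, x, y | t x t⁻¹ = x y x, t y t⁻¹ = y x⟩. Then the following are equivalent: (i) there exist b₁, b₂ ∈ κ, not both zero, and a group homomorphism φ : Γ → GL₂(κ) with φ(t) = [[α, 0], [0, 1]], φ(x) = [[1, b₁], [0, 1]], and φ(y) = [[1, b₂], [0, 1]]; (ii) α² − 3α + 1 = 0 in κ. -/
open Matrix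

/-- Relators of the fiber-bundle presentation
`⟨t, x, y | t x t⁻¹ = x y x, t y t⁻¹ = y x⟩` of the figure-eight knot group,
with `t, x, y` the generators `0, 1, 2`. -/
def figureEightRels : Set (FreeGroup (Fin 3)) :=
  { FreeGroup.of 0 * FreeGroup.of 1 * (FreeGroup.of 0)⁻¹ *
      (FreeGroup.of 1 * FreeGroup.of 2 * FreeGroup.of 1)⁻¹,
    FreeGroup.of 0 * FreeGroup.of 2 * (FreeGroup.of 0)⁻¹ *
      (FreeGroup.of 2 * FreeGroup.of 1)⁻¹ }

/-- The figure-eight knot group `⟨t, x, y | t x t⁻¹ = x y x, t y t⁻¹ = y x⟩`. -/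
abbrev FigureEightGroup : Type := PresentedGroup figureEightRels

/-- de Rham's construction for the figure-eight knot: there is a homomorphism of
the figure-eight knot group into the affine subgroup of `GL₂(κ)` sending `t` to
the dilation by `α ≠ 0` and `x, y` to translations by `b₁, b₂` not both zero if
and only if `α` is a root of the Alexander polynomial `t² - 3t + 1`. -/
theorem stmt_11 {κ : Type*} [Field κ] (α : κ) (hα : α ≠ 0) :
    (∃ b₁ b₂ : κ, ¬(b₁ = 0 ∧ b₂ = 0) ∧
      ∃ φ : FigureEightGroup →* GL (Fin 2) κ,
        (φ (PresentedGroup.of 0) : Matrix (Fin 2) (Fin 2) κ) = !![α, 0; 0, 1] ∧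
        (φ (PresentedGroup.of 1) : Matrix (Fin 2) (Fin 2) κ) = !![1, b₁; 0, 1] ∧
        (φ (PresentedGroup.of 2) : Matrix (Fin 2) (Fin 2) κ) = !![1, b₂; 0, 1]) ↔
      α ^ 2 - 3 * α + 1 = 0 := by
  constructor
  · rintro ⟨b₁, b₂, hb, φ, ht, hx, hy⟩
    have mem1 : (FreeGroup.of 0 * FreeGroup.of 1 * (FreeGroup.of 0)⁻¹ *
        (FreeGroup.of 1 * FreeGroup.of 2 * FreeGroup.of 1)⁻¹) ∈ figureEightRels :=
      Set.mem_insert _ _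
    have mem2 : (FreeGroup.of 0 * FreeGroup.of 2 * (FreeGroup.of 0)⁻¹ *
        (FreeGroup.of 2 * FreeGroup.of 1)⁻¹) ∈ figureEightRels :=
      Set.mem_insert_of_mem _ rfl
    have rel1 : (PresentedGroup.of 0 * PresentedGroup.of 1 * (PresentedGroup.of 0)⁻¹ *
        (PresentedGroup.of 1 * PresentedGroup.of 2 * PresentedGroup.of 1)⁻¹ :
        FigureEightGroup) = 1 :=
      (QuotientGroup.eq_one_iff _).mpr (Subgroup.subset_normalClosure mem1)
    have rel2 : (PresentedGroup.of 0 * PresentedGroup.of 2 * (PresentedGroup.of 0)⁻¹ *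
        (PresentedGroup.of 2 * PresentedGroup.of 1)⁻¹ :
        FigureEightGroup) = 1 :=
      (QuotientGroup.eq_one_iff _).mpr (Subgroup.subset_normalClosure mem2)
    have h1 := congrArg φ rel1
    have h2 := congrArg φ rel2
    simp only [_root_.map_mul, _root_.map_inv, _root_.map_one] at h1 h2
    rw [mul_inv_eq_one] at h1 h2
    have h1' : φ (PresentedGroup.of 0) * φ (PresentedGroup.of 1) =
        φ (PresentedGroup.of 1) * φ (PresentedGroup.of 2) * φ (PresentedGroup.of 1) *
          φ (PresentedGroup.of 0) := by
      rw [← h1]; group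
    have h2' : φ (PresentedGroup.of 0) * φ (PresentedGroup.of 2) =
        φ (PresentedGroup.of 2) * φ (PresentedGroup.of 1) * φ (PresentedGroup.of 0) := by
      rw [← h2]; group
    have m1 := congrArg Units.val h1'
    have m2 := congrArg Units.val h2'
    simp only [Units.val_mul, ht, hx, hy] at m1 m2
    have e1 := congrFun (congrFun m1 0) 1
    have e2 := congrFun (congrFun m2 0) 1
    simp [Matrix.mul_apply, Fin.sum_univ_two] at e1 e2
    have hb1 : b₁ ≠ 0 := by
      intro h0
      apply hb
      refine ⟨h0, ?_⟩
      subst h0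
      linear_combination -e1
    have key : (α ^ 2 - 3 * α + 1) * b₁ = 0 := by linear_combination (α - 1) * e1 + e2
    exact (mul_eq_zero.mp key).resolve_right hb1
  · intro hroot
    refine ⟨α - 1, 1, by simp, ?_⟩
    have hT : !![α, 0; 0, (1:κ)] * !![α⁻¹, 0; 0, 1] = 1 := by
      ext i j
      fin_cases i <;> fin_cases j <;>
        simp [Matrix.mul_apply, Fin.sum_univ_two, mul_inv_cancel₀ hα]
    have hT' : !![α⁻¹, 0; 0, (1:κ)] * !![α, 0; 0, 1] = 1 := by
      ext i j
      fin_cases i <;> fin_cases j <;>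
        simp [Matrix.mul_apply, Fin.sum_univ_two, inv_mul_cancel₀ hα]
    have hXgen : ∀ b : κ, !![1, b; 0, (1:κ)] * !![1, -b; 0, 1] = 1 := by
      intro b
      ext i j
      fin_cases i <;> fin_cases j <;>
        simp [Matrix.mul_apply, Fin.sum_univ_two]
    have hXgen' : ∀ b : κ, !![1, -b; 0, (1:κ)] * !![1, b; 0, 1] = 1 := by
      intro b
      ext i j
      fin_cases i <;> fin_cases j <;>
        simp [Matrix.mul_apply, Fin.sum_univ_two]
    let T : GL (Fin 2) κ := ⟨!![α, 0; 0, 1], !![α⁻¹, 0; 0, 1], hT, hT'⟩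
    let X : GL (Fin 2) κ := ⟨!![1, α - 1; 0, 1], !![1, -(α - 1); 0, 1],
      hXgen _, hXgen' _⟩
    let Y : GL (Fin 2) κ := ⟨!![1, 1; 0, 1], !![1, -1; 0, 1],
      by simpa using hXgen 1, by simpa using hXgen' 1⟩
    let f : Fin 3 → GL (Fin 2) κ := ![T, X, Y]
    have key1 : T * X = X * Y * X * T := by
      refine Units.ext ?_
      show (!![α, 0; 0, 1] : Matrix (Fin 2) (Fin 2) κ) * !![1, α - 1; 0, 1] =
        !![1, α - 1; 0, 1] * !![1, 1; 0, 1] * !![1, α - 1; 0, 1] * !![α, 0; 0, 1]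
      ext i j
      fin_cases i <;> fin_cases j <;>
        simp [Matrix.mul_apply, Fin.sum_univ_two] <;>
        linear_combination hroot
    have key2 : T * Y = Y * X * T := by
      refine Units.ext ?_
      show (!![α, 0; 0, 1] : Matrix (Fin 2) (Fin 2) κ) * !![1, 1; 0, 1] =
        !![1, 1; 0, 1] * !![1, α - 1; 0, 1] * !![α, 0; 0, 1]
      ext i j
      fin_cases i <;> fin_cases j <;>
        simp [Matrix.mul_apply, Fin.sum_univ_two]
    have hrels : ∀ r ∈ figureEightRels, FreeGroup.lift f r = 1 := by
      intro r hr
      rcases hr with h | h <;> subst h <;>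
        simp only [_root_.map_mul, _root_.map_inv, FreeGroup.lift_apply_of]
      · show f 0 * f 1 * (f 0)⁻¹ * (f 1 * f 2 * f 1)⁻¹ = 1
        have : f 0 = T := rfl
        have h1 : f 1 = X := rfl
        have h2 : f 2 = Y := rfl
        rw [this, h1, h2, key1]
        group
      · show f 0 * f 2 * (f 0)⁻¹ * (f 2 * f 1)⁻¹ = 1
        have : f 0 = T := rfl
        have h1 : f 1 = X := rfl
        have h2 : f 2 = Y := rfl
        rw [this, h1, h2, key2]
        group
    refine ⟨PresentedGroup.toGroup hrels, ?_, ?_, ?_⟩ <;>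
      rw [PresentedGroup.toGroup.of] <;> rfl
end

section
/- Let Γ be the group with presentation ⟨t, x, y | t x t⁻¹ = x y x, t y t⁻¹ = y x⟩ and let F = ZMod 11. The matrices T = [[5, 0], [0, 1]], X = [[1, 1], [0, 1]], Y = [[1, 3], [0, 1]] over F are invertible and satisfy T X T⁻¹ = X Y X and T Y T⁻¹ = Y X, so there is a group homomorphism ρ : Γ → GL₂(F) with ρ(t) = T, ρ(x) = X, ρ(y) = Y; moreover the subgroup of GL₂(F) generated by T, X, Y is non-abelian and has order 55. -/
open Matrix

namespace Stmt12Aux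

def T : GL (Fin 2) (ZMod 11) := ⟨!![5,0;0,1], !![9,0;0,1], by decide, by decide⟩
def X : GL (Fin 2) (ZMod 11) := ⟨!![1,1;0,1], !![1,10;0,1], by decide, by decide⟩
def Y : GL (Fin 2) (ZMod 11) := ⟨!![1,3;0,1], !![1,8;0,1], by decide, by decide⟩

/-- The subgroup of affine upper-triangular matrices with `a^5 = 1`. -/
def H : Subgroup (GL (Fin 2) (ZMod 11)) where
  carrier := {M | (M : Matrix (Fin 2) (Fin 2) (ZMod 11)) 1 0 = 0 ∧
    (M : Matrix (Fin 2) (Fin 2) (ZMod 11)) 1 1 = 1 ∧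
    ((M : Matrix (Fin 2) (Fin 2) (ZMod 11)) 0 0) ^ 5 = 1}
  one_mem' := by norm_num
  mul_mem' := by
    rintro A B ⟨hA10, hA11, hA00⟩ ⟨hB10, hB11, hB00⟩
    refine ⟨?_, ?_, ?_⟩ <;>
      simp [Units.val_mul, Matrix.mul_apply, Fin.sum_univ_two, hA10, hA11, hA00, hB10, hB11,
        mul_pow, hB00]
  inv_mem' := by
    rintro A ⟨hA10, hA11, hA00⟩
    have h : (A : Matrix (Fin 2) (Fin 2) (ZMod 11)) *
        ((A⁻¹ : GL (Fin 2) (ZMod 11)) : Matrix (Fin 2) (Fin 2) (ZMod 11)) = 1 := A.mul_inv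
    have h10 := congrFun (congrFun h 1) 0
    have h11 := congrFun (congrFun h 1) 1
    have h00 := congrFun (congrFun h 0) 0
    rw [Matrix.mul_apply, Fin.sum_univ_two, hA10, hA11, zero_mul, zero_add, one_mul] at h10 h11
    rw [Matrix.mul_apply, Fin.sum_univ_two] at h00
    have h10' : ((A⁻¹ : GL (Fin 2) (ZMod 11)) : Matrix (Fin 2) (Fin 2) (ZMod 11)) 1 0 = 0 :=
      h10.trans (by decide)
    have h11' : ((A⁻¹ : GL (Fin 2) (ZMod 11)) : Matrix (Fin 2) (Fin 2) (ZMod 11)) 1 1 = 1 :=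
      h11.trans (by decide)
    refine ⟨h10', h11', ?_⟩
    rw [h10', mul_zero, add_zero] at h00
    have h1 : (A : Matrix (Fin 2) (Fin 2) (ZMod 11)) 0 0 *
        ((A⁻¹ : GL (Fin 2) (ZMod 11)) : Matrix (Fin 2) (Fin 2) (ZMod 11)) 0 0 = 1 :=
      h00.trans (by decide)
    have h2 := congrArg (· ^ 5) h1
    simp only [mul_pow, one_pow, hA00, one_mul] at h2
    exact h2

lemma closure_le_H : Subgroup.closure ({T, X, Y} : Set (GL (Fin 2) (ZMod 11))) ≤ H := by
  rw [Subgroup.closure_le]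
  rintro M (rfl | rfl | rfl) <;> exact ⟨by decide, by decide, by decide⟩

lemma card5 : Fintype.card {a : ZMod 11 // a ^ 5 = 1} = 5 := by decide
lemma card11 : Fintype.card (ZMod 11) = 11 := by decide

end Stmt12Aux

/-- The explicit representation `ρ_α` of the figure-eight knot group over
`𝔽₁₁` with `α = 5`: the matrices `T = [[5,0],[0,1]]`, `X = [[1,1],[0,1]]`,
`Y = [[1,3],[0,1]]` are invertible, satisfy the two knot-group relations, induce a
homomorphism `ρ : Γ → GL₂(𝔽₁₁)`, and generate a non-abelian subgroup of order
`55`. (End of Section 2.2.1.) -/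
theorem stmt_12 :
    ∃ T X Y : GL (Fin 2) (ZMod 11),
      (T : Matrix (Fin 2) (Fin 2) (ZMod 11)) = !![5, 0; 0, 1] ∧
      (X : Matrix (Fin 2) (Fin 2) (ZMod 11)) = !![1, 1; 0, 1] ∧
      (Y : Matrix (Fin 2) (Fin 2) (ZMod 11)) = !![1, 3; 0, 1] ∧
      T * X * T⁻¹ = X * Y * X ∧
      T * Y * T⁻¹ = Y * X ∧
      (∃ ρ : FigureEightGroup →* GL (Fin 2) (ZMod 11),
        ρ (PresentedGroup.of 0) = T ∧ ρ (PresentedGroup.of 1) = X ∧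
          ρ (PresentedGroup.of 2) = Y) ∧
      (¬ ∀ a ∈ Subgroup.closure ({T, X, Y} : Set (GL (Fin 2) (ZMod 11))),
          ∀ b ∈ Subgroup.closure ({T, X, Y} : Set (GL (Fin 2) (ZMod 11))),
            a * b = b * a) ∧
      Nat.card (Subgroup.closure ({T, X, Y} : Set (GL (Fin 2) (ZMod 11)))) = 55 := by
  refine ⟨Stmt12Aux.T, Stmt12Aux.X, Stmt12Aux.Y, rfl, rfl, rfl,
    Units.ext (by decide), Units.ext (by decide), ?_, ?_, ?_⟩
  · -- homomorphism
    have hrel : ∀ r ∈ figureEightRels,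
        FreeGroup.lift (![Stmt12Aux.T, Stmt12Aux.X, Stmt12Aux.Y]) r = 1 := by
      rintro r (rfl | rfl) <;>
        · simp only [_root_.map_mul, _root_.map_inv, FreeGroup.lift_apply_of]
          exact Units.ext (by decide)
    exact ⟨PresentedGroup.toGroup hrel, PresentedGroup.toGroup.of hrel,
      PresentedGroup.toGroup.of hrel, PresentedGroup.toGroup.of hrel⟩
  · -- non-abelian
    intro h
    have := h Stmt12Aux.T (Subgroup.subset_closure (by simp)) Stmt12Aux.X
      (Subgroup.subset_closure (by simp))
    have h2 := congrArg Units.val this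
    revert h2; decide
  · -- cardinality
    set C := Subgroup.closure ({Stmt12Aux.T, Stmt12Aux.X, Stmt12Aux.Y} :
      Set (GL (Fin 2) (ZMod 11))) with hC
    have hTmem : Stmt12Aux.T ∈ C := Subgroup.subset_closure (by simp)
    have hXmem : Stmt12Aux.X ∈ C := Subgroup.subset_closure (by simp)
    haveI : Fact (Nat.Prime 5) := ⟨by norm_num⟩
    haveI : Fact (Nat.Prime 11) := ⟨by norm_num⟩
    have hordT : orderOf Stmt12Aux.T = 5 := by
      have h5 : Stmt12Aux.T ^ 5 = 1 := Units.ext (by decide)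
      have := orderOf_eq_prime h5 (by intro h; exact absurd (congrArg Units.val h) (by decide))
      exact this
    have hordX : orderOf Stmt12Aux.X = 11 := by
      have h11 : Stmt12Aux.X ^ 11 = 1 := Units.ext (by decide)
      have := orderOf_eq_prime h11 (by intro h; exact absurd (congrArg Units.val h) (by decide))
      exact this
    have hdvd5 : 5 ∣ Nat.card C := by
      have := orderOf_dvd_natCard (⟨Stmt12Aux.T, hTmem⟩ : C)
      rwa [Subgroup.orderOf_mk, hordT] at this
    have hdvd11 : 11 ∣ Nat.card C := by
      have := orderOf_dvd_natCard (⟨Stmt12Aux.X, hXmem⟩ : C)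
      rwa [Subgroup.orderOf_mk, hordX] at this
    have hdvd : 55 ∣ Nat.card C := Nat.Coprime.mul_dvd_of_dvd_of_dvd (by norm_num) hdvd5 hdvd11
    -- upper bound
    have hle : Nat.card C ≤ 55 := by
      have hf : Function.Injective (fun M : C =>
          ((⟨((M : GL (Fin 2) (ZMod 11)) : Matrix (Fin 2) (Fin 2) (ZMod 11)) 0 0,
            (Stmt12Aux.closure_le_H M.2).2.2⟩ : {a : ZMod 11 // a ^ 5 = 1}),
            ((M : GL (Fin 2) (ZMod 11)) : Matrix (Fin 2) (Fin 2) (ZMod 11)) 0 1)) := by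
        rintro ⟨M, hM⟩ ⟨N, hN⟩ hMN
        simp only [Prod.mk.injEq, Subtype.mk.injEq] at hMN
        obtain ⟨hM10, hM11, -⟩ := Stmt12Aux.closure_le_H hM
        obtain ⟨hN10, hN11, -⟩ := Stmt12Aux.closure_le_H hN
        have : (M : Matrix (Fin 2) (Fin 2) (ZMod 11)) = N := by
          ext i j
          fin_cases i <;> fin_cases j <;>
            simp_all
        exact Subtype.ext (Units.ext this)
      have := Nat.card_le_card_of_injective _ hf
      have hcard : Nat.card ({a : ZMod 11 // a ^ 5 = 1} × ZMod 11) = 55 := by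
        rw [Nat.card_prod, Nat.card_eq_fintype_card, Nat.card_eq_fintype_card,
          Stmt12Aux.card5, Stmt12Aux.card11]
      omega
    have hpos : 0 < Nat.card C := Nat.card_pos
    exact le_antisymm hle (Nat.le_of_dvd hpos hdvd)
end
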